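/- arXiv:1611.07223 — 5 statements merged into one kernel-verified Lean document; each statement's English description precedes it below -/
import Mathlib

section
/- Let (M, ρ) be a complete separable metric space and let Φ : [0,∞) × M → M be a semiflow such that, in addition, x ↦ Φ(T,x) is continuous for every T ≥ 0. For each n ∈ ℕ let (Pⁿ_t)_{t≥0} be a family of Markov (probability) kernels on M and let μₙ be a stationary probability measure for (Pⁿ_t), i.e. ∫ Pⁿ_t(x,A) μₙ(dx) = μₙ(A) for all t ≥ 0 and Borel A. Assume the probability-convergence hypothesis: for every compact set K ⊆ M, every T > 0 and every δ > 0, lim_{n→∞} sup_{x∈K} Pⁿ_T(x, {y ∈ M : ρ(y, Φ(T,x)) ≥ δ}) = 0. If μₙ converges weakly to a probability measure μ, then μ is Φ-invariant, i.e. μ(Φ(t,·)⁻¹(A)) = μ(A) for every Borel set A and every t ≥ 0, and moreover μ(B(Φ)) = 1, where B(Φ) is the Birkhoff center of Φ. -/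
/-!
Stationarity of `μₙ` says `∫ g dμₙ = ∫ Pⁿ_t g dμₙ`. For a bounded Lipschitz `g`, the function
`Pⁿ_t g` is uniformly close to `g ∘ Φ_t` on each compact set for large `n`, by the
probability-convergence hypothesis; since a weakly convergent sequence on a Polish space is tight,
the compact sets carry almost all the mass of every `μₙ`, so `∫ g ∘ Φ_t dμ = ∫ g dμ` in the limit.
Bounded Lipschitz functions determine a probability measure, hence `μ` is `Φ_t`-invariant. Then
Poincaré recurrence for the time-one map makes `μ`-almost every point recurrent, so `μ` is carried
by the Birkhoff center.
-/

open MeasureTheory Topology Filter Set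

/-- The ω-limit set of a point `x` under the semiflow `Φ`:
`ω(x) = {y | for every neighborhood U of y and every k ∈ ℕ, ∃ s ≥ k with Φ s x ∈ U}`. -/
def omegaLimitSet {M : Type*} [TopologicalSpace M] (Φ : ℝ → M → M) (x : M) : Set M :=
  {y | ∀ U ∈ nhds y, ∀ k : ℕ, ∃ s : ℝ, (k : ℝ) ≤ s ∧ Φ s x ∈ U}

/-- The Birkhoff center of the semiflow `Φ`: the closure of the set of recurrent points. -/
def birkhoffCenter {M : Type*} [TopologicalSpace M] (Φ : ℝ → M → M) : Set M :=
  closure {x | x ∈ omegaLimitSet Φ x}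

open ProbabilityTheory
open scoped ENNReal NNReal BoundedContinuousFunction

lemma MeasureTheory.Measure.integral_comp {α β : Type*} [MeasurableSpace α] [MeasurableSpace β]
    {κ : Kernel α β} {μ : Measure α} {f : β → ℝ} (hf : Integrable f (κ ∘ₘ μ)) :
    ∫ y, f y ∂(κ ∘ₘ μ) = ∫ x, ∫ y, f y ∂κ x ∂μ := by
  rw [Measure.comp_eq_comp_const_apply] at hf ⊢
  rw [Kernel.integral_comp hf, Kernel.const_apply]

lemma MeasureTheory.Measure.comp_eq_self_of_forall_lintegral_eq {X : Type*} [MeasurableSpace X]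
    {κ : Kernel X X} {ν : Measure X} (h : ∀ A, MeasurableSet A → ∫⁻ x, κ x A ∂ν = ν A) :
    κ ∘ₘ ν = ν :=
  Measure.ext fun A hA ↦ by rw [Measure.bind_apply hA κ.aemeasurable, h A hA]

lemma lintegral_le_biSup_add_measure_compl {α : Type*} [MeasurableSpace α] (ν : Measure α)
    [IsProbabilityMeasure ν] {g : α → ℝ≥0∞} (hg : ∀ x, g x ≤ 1) {K : Set α}
    (hK : MeasurableSet K) : ∫⁻ x, g x ∂ν ≤ (⨆ x ∈ K, g x) + ν Kᶜ := by
  rw [← lintegral_add_compl g hK]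
  gcongr
  · calc ∫⁻ x in K, g x ∂ν ≤ ∫⁻ _ in K, ⨆ x ∈ K, g x ∂ν :=
          setLIntegral_mono measurable_const fun x hx ↦ le_biSup g hx
      _ ≤ ⨆ x ∈ K, g x := by
          rw [setLIntegral_const]
          exact mul_le_of_le_one_right' prob_le_one
  · calc ∫⁻ x in Kᶜ, g x ∂ν ≤ ∫⁻ _ in Kᶜ, 1 ∂ν :=
          setLIntegral_mono measurable_const fun x _ ↦ hg x
      _ = ν Kᶜ := by rw [setLIntegral_const, one_mul]

section Lipschitz

variable {X : Type*} [PseudoMetricSpace X] [MeasurableSpace X] [OpensMeasurableSpace X]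

lemma abs_sub_integral_le_of_lipschitzWith {f : X →ᵇ ℝ} {L : ℝ≥0} (hf : LipschitzWith L f)
    (ν : Measure X) [IsProbabilityMeasure ν] (z : X) {δ : ℝ} (hδ : 0 ≤ δ) :
    |f z - ∫ y, f y ∂ν| ≤ 2 * ‖f‖ * ν.real {y | δ ≤ dist y z} + L * δ := by
  set far := {y | δ ≤ dist y z}
  have hfar : MeasurableSet far :=
    (isClosed_le continuous_const (continuous_id.dist continuous_const)).measurableSet
  have hpt : ∀ y, |f z - f y| ≤ far.indicator (fun _ ↦ 2 * ‖f‖) y + L * δ := by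
    intro y
    rw [← Real.dist_eq]
    by_cases hy : y ∈ far
    · rw [indicator_of_mem hy]
      have := f.dist_le_two_norm z y
      have : 0 ≤ (L : ℝ) * δ := by positivity
      linarith
    · rw [indicator_of_notMem hy, zero_add]
      calc dist (f z) (f y) ≤ L * dist z y := hf.dist_le_mul z y
        _ ≤ L * δ := by
          gcongr
          rw [dist_comm]
          exact (not_le.mp hy).le
  calc |f z - ∫ y, f y ∂ν| = |∫ y, (f z - f y) ∂ν| := by
        rw [integral_sub (integrable_const _) (f.integrable ν), integral_const]
        simp
    _ ≤ ∫ y, |f z - f y| ∂ν := abs_integral_le_integral_abs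
    _ ≤ ∫ y, (far.indicator (fun _ ↦ 2 * ‖f‖) y + L * δ) ∂ν :=
        integral_mono ((integrable_const _).sub (f.integrable ν)).abs
          (((integrable_const _).indicator hfar).add (integrable_const _)) hpt
    _ = 2 * ‖f‖ * ν.real far + L * δ := by
        rw [integral_add ((integrable_const _).indicator hfar) (integrable_const _),
          integral_indicator_const _ hfar, integral_const]
        simp [mul_comm]

lemma abs_integral_comp_sub_integral_le_of_comp_eq [SecondCountableTopology X] {κ : Kernel X X}
    [IsMarkovKernel κ] {ν : Measure X} [IsProbabilityMeasure ν] (hν : κ ∘ₘ ν = ν) {F : X → X}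
    (hF : Continuous F) {f : X →ᵇ ℝ} {L : ℝ≥0} (hf : LipschitzWith L f) {δ : ℝ} (hδ : 0 ≤ δ) :
    |∫ x, f (F x) ∂ν - ∫ x, f x ∂ν| ≤
      2 * ‖f‖ * (∫⁻ x, κ x {y | δ ≤ dist y (F x)} ∂ν).toReal + L * δ := by
  have hfar : Measurable fun x ↦ κ x {y | δ ≤ dist y (F x)} :=
    Kernel.measurable_kernel_prodMk_left
      (isClosed_le continuous_const (continuous_snd.dist (hF.comp continuous_fst))).measurableSet
  have hfF : Integrable (fun x ↦ f (F x)) ν := (f.compContinuous ⟨F, hF⟩).integrable ν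
  have hf_avg : Integrable (fun x ↦ ∫ y, f y ∂κ x) ν :=
    .of_bound f.continuous.stronglyMeasurable.integral_kernel.aestronglyMeasurable ‖f‖
      (ae_of_all _ fun x ↦ f.norm_integral_le_norm (μ := κ x))
  have hfar_int : Integrable (fun x ↦ (κ x).real {y | δ ≤ dist y (F x)}) ν :=
    .of_bound hfar.ennreal_toReal.aestronglyMeasurable 1 (ae_of_all _ fun x ↦ by
      rw [Real.norm_eq_abs, abs_of_nonneg measureReal_nonneg]
      exact measureReal_le_one)
  have hstat : ∫ x, ∫ y, f y ∂κ x ∂ν = ∫ x, f x ∂ν := by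
    rw [← Measure.integral_comp (by rw [hν]; exact f.integrable ν), hν]
  rw [← hstat, ← integral_sub hfF hf_avg]
  calc |∫ x, (f (F x) - ∫ y, f y ∂κ x) ∂ν| ≤ ∫ x, |f (F x) - ∫ y, f y ∂κ x| ∂ν :=
        abs_integral_le_integral_abs
    _ ≤ ∫ x, (2 * ‖f‖ * (κ x).real {y | δ ≤ dist y (F x)} + L * δ) ∂ν :=
        integral_mono (hfF.sub hf_avg).abs ((hfar_int.const_mul _).add (integrable_const _))
          fun x ↦ abs_sub_integral_le_of_lipschitzWith hf (κ x) (F x) hδ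
    _ = 2 * ‖f‖ * (∫⁻ x, κ x {y | δ ≤ dist y (F x)} ∂ν).toReal + L * δ := by
        rw [integral_add (hfar_int.const_mul _) (integrable_const _), integral_const_mul,
          ← integral_toReal hfar.aemeasurable (ae_of_all _ fun x ↦ measure_lt_top _ _)]
        simp [measureReal_def]

end Lipschitz

section WeakLimit

variable {X : Type*} [MetricSpace X] [MeasurableSpace X] [BorelSpace X]

lemma MeasureTheory.ProbabilityMeasure.eq_of_forall_lipschitzWith_integral_eq
    {μ ν : ProbabilityMeasure X}
    (h : ∀ (f : X →ᵇ ℝ) (L : ℝ≥0), LipschitzWith L f →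
      ∫ x, f x ∂(μ : Measure X) = ∫ x, f x ∂(ν : Measure X)) :
    μ = ν := by
  have hconst : Tendsto (fun _ : ℕ ↦ μ) atTop (𝓝 ν) :=
    tendsto_iff_forall_lipschitz_integral_tendsto.mpr fun f ⟨C, hC⟩ ⟨L, hf⟩ ↦ by
      have hfμν : ∫ x, f x ∂(μ : Measure X) = ∫ x, f x ∂(ν : Measure X) :=
        h (.mkOfBound ⟨f, hf.continuous⟩ C hC) L hf
      exact hfμν ▸ tendsto_const_nhds
  exact tendsto_nhds_unique tendsto_const_nhds hconst

variable [CompleteSpace X] [SecondCountableTopology X]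
  {μs : ℕ → ProbabilityMeasure X} {μ : ProbabilityMeasure X}

lemma isTightMeasureSet_range_of_tendsto (h : Tendsto μs atTop (𝓝 μ)) :
    IsTightMeasureSet (range fun n ↦ (μs n : Measure X)) := by
  have := isTightMeasureSet_of_isCompact_closure <|
    h.isCompact_insert_range.closure_of_subset (subset_insert μ (range μs))
  convert this using 1
  ext
  simp

variable {F : X → X} {κ : ℕ → Kernel X X} [∀ n, IsMarkovKernel (κ n)]

lemma eventually_abs_integral_comp_sub_integral_le (hμ : Tendsto μs atTop (𝓝 μ))
    (hF : Continuous F) (hstat : ∀ n, κ n ∘ₘ (μs n : Measure X) = μs n)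
    (hκ : ∀ K, IsCompact K → ∀ δ > 0,
      Tendsto (fun n ↦ ⨆ x ∈ K, κ n x {y | δ ≤ dist y (F x)}) atTop (𝓝 0))
    {f : X →ᵇ ℝ} {L : ℝ≥0} (hf : LipschitzWith L f) {δ η : ℝ} (hδ : 0 < δ) (hη : 0 < η) :
    ∀ᶠ n in atTop, |∫ x, f (F x) ∂(μs n : Measure X) - ∫ x, f x ∂(μs n : Measure X)| ≤
      2 * ‖f‖ * (2 * η) + L * δ := by
  obtain ⟨K, hK, hKc⟩ := isTightMeasureSet_iff_exists_isCompact_measure_compl_le.mp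
    (isTightMeasureSet_range_of_tendsto hμ) (ENNReal.ofReal η) (by positivity)
  filter_upwards [(hκ K hK δ hδ).eventually (eventually_le_nhds (ENNReal.ofReal_pos.mpr hη))]
    with n hn
  have hfar : (∫⁻ x, κ n x {y | δ ≤ dist y (F x)} ∂(μs n : Measure X)).toReal ≤ 2 * η := by
    refine ENNReal.toReal_le_of_le_ofReal (by positivity) ?_
    calc _ ≤ (⨆ x ∈ K, κ n x {y | δ ≤ dist y (F x)}) + (μs n : Measure X) Kᶜ :=
          lintegral_le_biSup_add_measure_compl _ (fun x ↦ prob_le_one) hK.measurableSet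
      _ ≤ ENNReal.ofReal η + ENNReal.ofReal η := add_le_add hn (hKc _ ⟨n, rfl⟩)
      _ = ENNReal.ofReal (2 * η) := by rw [← ENNReal.ofReal_add hη.le hη.le, two_mul]
  calc _ ≤ _ := abs_integral_comp_sub_integral_le_of_comp_eq (hstat n) hF hf hδ.le
    _ ≤ _ := by gcongr

lemma integral_comp_eq_of_tendsto_of_comp_eq (hμ : Tendsto μs atTop (𝓝 μ))
    (hF : Continuous F) (hstat : ∀ n, κ n ∘ₘ (μs n : Measure X) = μs n)
    (hκ : ∀ K, IsCompact K → ∀ δ > 0,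
      Tendsto (fun n ↦ ⨆ x ∈ K, κ n x {y | δ ≤ dist y (F x)}) atTop (𝓝 0))
    {f : X →ᵇ ℝ} {L : ℝ≥0} (hf : LipschitzWith L f) :
    ∫ x, f (F x) ∂(μ : Measure X) = ∫ x, f x ∂(μ : Measure X) := by
  have hlim : Tendsto
      (fun n ↦ ∫ x, f (F x) ∂(μs n : Measure X) - ∫ x, f x ∂(μs n : Measure X)) atTop
      (𝓝 (∫ x, f (F x) ∂(μ : Measure X) - ∫ x, f x ∂(μ : Measure X))) :=
    (ProbabilityMeasure.tendsto_iff_forall_integral_tendsto.mp hμ (f.compContinuous ⟨F, hF⟩)).sub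
      (ProbabilityMeasure.tendsto_iff_forall_integral_tendsto.mp hμ f)
  set r : ℕ → ℝ := fun k ↦ 1 / (k + 1)
  have hbound : ∀ k, |∫ x, f (F x) ∂(μ : Measure X) - ∫ x, f x ∂(μ : Measure X)| ≤
      2 * ‖f‖ * (2 * r k) + L * r k := fun k ↦
    le_of_tendsto hlim.abs <| eventually_abs_integral_comp_sub_integral_le hμ hF hstat hκ hf
      (by positivity) (by positivity)
  have hr : Tendsto (fun k ↦ 2 * ‖f‖ * (2 * r k) + L * r k) atTop (𝓝 0) := by
    simpa [r] using ((tendsto_one_div_add_atTop_nhds_zero_nat.const_mul 2).const_mul (2 * ‖f‖)).add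
      (tendsto_one_div_add_atTop_nhds_zero_nat.const_mul (L : ℝ))
  exact sub_eq_zero.mp (abs_nonpos_iff.mp (ge_of_tendsto' hr hbound))

lemma map_eq_of_tendsto_of_comp_eq (hμ : Tendsto μs atTop (𝓝 μ))
    (hF : Continuous F) (hstat : ∀ n, κ n ∘ₘ (μs n : Measure X) = μs n)
    (hκ : ∀ K, IsCompact K → ∀ δ > 0,
      Tendsto (fun n ↦ ⨆ x ∈ K, κ n x {y | δ ≤ dist y (F x)}) atTop (𝓝 0)) :
    (μ : Measure X).map F = μ := by
  have := ProbabilityMeasure.eq_of_forall_lipschitzWith_integral_eq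
    (μ := μ.map hF.measurable.aemeasurable) (ν := μ) fun f L hf ↦ by
      rw [ProbabilityMeasure.toMeasure_map,
        integral_map hF.measurable.aemeasurable f.continuous.aestronglyMeasurable]
      exact integral_comp_eq_of_tendsto_of_comp_eq hμ hF hstat hκ hf
  simpa using congrArg ProbabilityMeasure.toMeasure this

end WeakLimit

section Semiflow

variable {M : Type*} {Φ : ℝ → M → M}

lemma iterate_time_one_apply (hid : ∀ x, Φ 0 x = x)
    (hsemi : ∀ t s : ℝ, 0 ≤ t → 0 ≤ s → ∀ x, Φ t (Φ s x) = Φ (t + s) x) (n : ℕ) (x : M) :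
    (Φ 1)^[n] x = Φ n x := by
  induction n with
  | zero => simp [hid]
  | succ n ih =>
    rw [Function.iterate_succ_apply', ih, hsemi 1 n zero_le_one n.cast_nonneg, add_comm]
    push_cast
    rfl

variable [TopologicalSpace M] [SecondCountableTopology M] [MeasurableSpace M]
  [OpensMeasurableSpace M] {μ : Measure M}

lemma ae_mem_omegaLimitSet_self [IsFiniteMeasure μ] (hid : ∀ x, Φ 0 x = x)
    (hsemi : ∀ t s : ℝ, 0 ≤ t → 0 ≤ s → ∀ x, Φ t (Φ s x) = Φ (t + s) x)
    (hμ : MeasurePreserving (Φ 1) μ μ) :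
    ∀ᵐ x ∂μ, x ∈ omegaLimitSet Φ x := by
  filter_upwards [hμ.conservative.ae_frequently_mem_of_mem_nhds] with x hx U hU k
  obtain ⟨n, hkn, hn⟩ := frequently_atTop.mp (hx U hU) k
  exact ⟨n, Nat.cast_le.mpr hkn, iterate_time_one_apply hid hsemi n x ▸ hn⟩

lemma measure_birkhoffCenter_eq_one [IsProbabilityMeasure μ] (hid : ∀ x, Φ 0 x = x)
    (hsemi : ∀ t s : ℝ, 0 ≤ t → 0 ≤ s → ∀ x, Φ t (Φ s x) = Φ (t + s) x)
    (hμ : MeasurePreserving (Φ 1) μ μ) :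
    μ (birkhoffCenter Φ) = 1 := by
  refine (prob_compl_eq_zero_iff (s := birkhoffCenter Φ) isClosed_closure.measurableSet).mp ?_
  exact measure_mono_null (compl_subset_compl.mpr fun x hx ↦ subset_closure hx)
    (ae_iff.mp (ae_mem_omegaLimitSet_self hid hsemi hμ))

end Semiflow

theorem limit_of_stationary_measures_invariant_and_supported_on_birkhoffCenter_general
    {M : Type*} [MetricSpace M] [CompleteSpace M] [TopologicalSpace.SeparableSpace M]
    [MeasurableSpace M] [BorelSpace M]
    (Φ : ℝ → M → M)
    (hcont_x : ∀ T : ℝ, 0 ≤ T → Continuous (Φ T))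
    (hid : ∀ x : M, Φ 0 x = x)
    (hsemi : ∀ t s : ℝ, 0 ≤ t → 0 ≤ s → ∀ x : M, Φ t (Φ s x) = Φ (t + s) x)
    (P : ℕ → ℝ → ProbabilityTheory.Kernel M M)
    (hP : ∀ n : ℕ, ∀ t : ℝ, ProbabilityTheory.IsMarkovKernel (P n t))
    (μseq : ℕ → Measure M)
    (hprob : ∀ n : ℕ, IsProbabilityMeasure (μseq n))
    (hstat : ∀ n : ℕ, ∀ t : ℝ, 0 ≤ t → ∀ A : Set M, MeasurableSet A →
      ∫⁻ x, P n t x A ∂(μseq n) = μseq n A)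
    (hpc : ∀ K : Set M, IsCompact K → ∀ T : ℝ, 0 < T → ∀ δ : ℝ, 0 < δ →
      Filter.Tendsto (fun n : ℕ => ⨆ x ∈ K, P n T x {y : M | δ ≤ dist y (Φ T x)})
        Filter.atTop (nhds 0))
    (μ : Measure M) [IsProbabilityMeasure μ]
    (hweak : ∀ g : BoundedContinuousFunction M ℝ,
      Filter.Tendsto (fun n : ℕ => ∫ x, g x ∂(μseq n)) Filter.atTop (nhds (∫ x, g x ∂μ))) :
    (∀ t : ℝ, 0 ≤ t → ∀ A : Set M, MeasurableSet A → μ (Φ t ⁻¹' A) = μ A) ∧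
      μ (birkhoffCenter Φ) = 1 := by
  have : SecondCountableTopology M := UniformSpace.secondCountable_of_separable M
  let μs : ℕ → ProbabilityMeasure M := fun n ↦ ⟨μseq n, hprob n⟩
  have hμ : Tendsto μs atTop (𝓝 ⟨μ, inferInstance⟩) :=
    ProbabilityMeasure.tendsto_iff_forall_integral_tendsto.mpr hweak
  have hmap : ∀ t, 0 ≤ t → μ.map (Φ t) = μ := by
    intro t ht
    rcases ht.eq_or_lt with rfl | ht
    · simp [show Φ 0 = id from funext hid]
    have (n : ℕ) : IsMarkovKernel (P n t) := hP n t
    exact map_eq_of_tendsto_of_comp_eq hμ (hcont_x t ht.le)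
      (fun n ↦ Measure.comp_eq_self_of_forall_lintegral_eq (hstat n t ht.le))
      (fun K hK δ hδ ↦ hpc K hK t ht δ hδ)
  refine ⟨fun t ht A hA ↦ ?_, measure_birkhoffCenter_eq_one hid hsemi
    ⟨(hcont_x 1 zero_le_one).measurable, hmap 1 zero_le_one⟩⟩
  rw [← Measure.map_apply (hcont_x t ht).measurable hA, hmap t ht]

/-- Main limiting theorem: on a Polish space, if `μₙ` are stationary measures for Markov
kernel families `(Pⁿ_t)` satisfying the probability-convergence hypothesis towards the
semiflow `Φ` (whose time-`t` maps are continuous), and `μₙ → μ` weakly, then `μ` is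
`Φ`-invariant and `μ` gives full measure to the Birkhoff center of `Φ`. -/
theorem limit_of_stationary_measures_invariant_and_supported_on_birkhoffCenter
    {M : Type*} [MetricSpace M] [CompleteSpace M] [TopologicalSpace.SeparableSpace M]
    [MeasurableSpace M] [BorelSpace M]
    (Φ : ℝ → M → M)
    (hcont_t : ∀ x : M, ContinuousOn (fun t : ℝ => Φ t x) (Set.Ici 0))
    (hcont_x : ∀ T : ℝ, 0 ≤ T → Continuous (Φ T))
    (hid : ∀ x : M, Φ 0 x = x)
    (hsemi : ∀ t s : ℝ, 0 ≤ t → 0 ≤ s → ∀ x : M, Φ t (Φ s x) = Φ (t + s) x)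
    (P : ℕ → ℝ → ProbabilityTheory.Kernel M M)
    (hP : ∀ n : ℕ, ∀ t : ℝ, ProbabilityTheory.IsMarkovKernel (P n t))
    (μseq : ℕ → Measure M)
    (hprob : ∀ n : ℕ, IsProbabilityMeasure (μseq n))
    (hstat : ∀ n : ℕ, ∀ t : ℝ, 0 ≤ t → ∀ A : Set M, MeasurableSet A →
      ∫⁻ x, P n t x A ∂(μseq n) = μseq n A)
    (hpc : ∀ K : Set M, IsCompact K → ∀ T : ℝ, 0 < T → ∀ δ : ℝ, 0 < δ →
      Filter.Tendsto (fun n : ℕ => ⨆ x ∈ K, P n T x {y : M | δ ≤ dist y (Φ T x)})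
        Filter.atTop (nhds 0))
    (μ : Measure M) [IsProbabilityMeasure μ]
    (hweak : ∀ g : BoundedContinuousFunction M ℝ,
      Filter.Tendsto (fun n : ℕ => ∫ x, g x ∂(μseq n)) Filter.atTop (nhds (∫ x, g x ∂μ))) :
    (∀ t : ℝ, 0 ≤ t → ∀ A : Set M, MeasurableSet A → μ (Φ t ⁻¹' A) = μ A) ∧
      μ (birkhoffCenter Φ) = 1 :=
  limit_of_stationary_measures_invariant_and_supported_on_birkhoffCenter_general Φ hcont_x hid hsemi
    P hP μseq hprob hstat hpc μ hweak
end

section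
/- Let M be a separable metric space, let Φ : [0,∞) × M → M be a semiflow, and let μ be a Φ-invariant Borel probability measure on M. Then μ(B(Φ)) = 1, where B(Φ) is the Birkhoff center of Φ; consequently the topological support of μ is contained in B(Φ). -/
/-! The time-one map `Φ 1` preserves `μ`, so by Poincaré recurrence almost every point returns
to each of its neighbourhoods at infinitely many integer times; such a point lies in its own
ω-limit set. Hence the recurrent points, and a fortiori their closure `B(Φ)`, have full measure,
and a closed set of full measure contains the support. -/

open MeasureTheory Topology Filter Set

section Semiflow

variable {M : Type*} (Φ : ℝ → M → M)

theorem iterate_eq_of_semiflow (hid : ∀ x : M, Φ 0 x = x)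
    (hsemi : ∀ t s : ℝ, 0 ≤ t → 0 ≤ s → ∀ x : M, Φ t (Φ s x) = Φ (t + s) x)
    {τ : ℝ} (hτ : 0 ≤ τ) (n : ℕ) (x : M) : (Φ τ)^[n] x = Φ (n * τ) x := by
  induction n with
  | zero => simp [hid]
  | succ n ih =>
    rw [Function.iterate_succ_apply', ih, hsemi τ _ hτ (by positivity)]
    push_cast
    ring_nf

theorem mem_omegaLimitSet_of_frequently_nat [TopologicalSpace M] {x y : M}
    (h : ∀ U ∈ 𝓝 y, ∃ᶠ n : ℕ in atTop, Φ n x ∈ U) : y ∈ omegaLimitSet Φ x := by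
  intro U hU k
  obtain ⟨n, hnU, hkn⟩ := ((h U hU).and_eventually (eventually_ge_atTop k)).exists
  exact ⟨n, Nat.cast_le.mpr hkn, hnU⟩

theorem ae_mem_omegaLimitSet_self_s1 [TopologicalSpace M] [SecondCountableTopology M]
    [MeasurableSpace M] [OpensMeasurableSpace M]
    (hmeas : ∀ t : ℝ, 0 ≤ t → Measurable (Φ t))
    (hid : ∀ x : M, Φ 0 x = x)
    (hsemi : ∀ t s : ℝ, 0 ≤ t → 0 ≤ s → ∀ x : M, Φ t (Φ s x) = Φ (t + s) x)
    (μ : Measure M) [IsFiniteMeasure μ]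
    (hinv : ∀ t : ℝ, 0 ≤ t → ∀ A : Set M, MeasurableSet A → μ (Φ t ⁻¹' A) = μ A) :
    ∀ᵐ x ∂μ, x ∈ omegaLimitSet Φ x := by
  have hpres : MeasurePreserving (Φ 1) μ μ :=
    ⟨hmeas 1 zero_le_one, Measure.ext fun A hA => by
      rw [Measure.map_apply (hmeas 1 zero_le_one) hA, hinv 1 zero_le_one A hA]⟩
  filter_upwards [hpres.conservative.ae_frequently_mem_of_mem_nhds] with x hx
  refine mem_omegaLimitSet_of_frequently_nat Φ fun U hU => (hx U hU).mono fun n hn => ?_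
  rwa [iterate_eq_of_semiflow Φ hid hsemi zero_le_one, mul_one] at hn

end Semiflow

theorem fullMeasure_birkhoffCenter_of_invariant_general
    {M : Type*} [MetricSpace M] [TopologicalSpace.SeparableSpace M]
    [MeasurableSpace M] [BorelSpace M]
    (Φ : ℝ → M → M)
    (hmeas : ∀ t : ℝ, 0 ≤ t → Measurable (Φ t))
    (hid : ∀ x : M, Φ 0 x = x)
    (hsemi : ∀ t s : ℝ, 0 ≤ t → 0 ≤ s → ∀ x : M, Φ t (Φ s x) = Φ (t + s) x)
    (μ : Measure M) [IsProbabilityMeasure μ]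
    (hinv : ∀ t : ℝ, 0 ≤ t → ∀ A : Set M, MeasurableSet A → μ (Φ t ⁻¹' A) = μ A) :
    μ (birkhoffCenter Φ) = 1 ∧
      {x : M | ∀ U ∈ nhds x, 0 < μ U} ⊆ birkhoffCenter Φ := by
  have : SecondCountableTopology M := UniformSpace.secondCountable_of_separable M
  have hB : birkhoffCenter Φ ∈ ae μ :=
    mem_of_superset (ae_mem_omegaLimitSet_self_s1 Φ hmeas hid hsemi μ hinv) subset_closure
  refine ⟨(prob_compl_eq_zero_iff isClosed_closure.measurableSet).1 (mem_ae_iff.1 hB),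
    fun x hx => Measure.support_subset_of_isClosed isClosed_closure hB ?_⟩
  exact (Measure.mem_support_iff_forall x).2 hx

/-- Poincaré recurrence: a `Φ`-invariant Borel probability measure on a separable metric
space gives full measure to the Birkhoff center of the semiflow `Φ`; consequently the
topological support of `μ` is contained in the Birkhoff center. -/
theorem fullMeasure_birkhoffCenter_of_invariant
    {M : Type*} [MetricSpace M] [TopologicalSpace.SeparableSpace M]
    [MeasurableSpace M] [BorelSpace M]
    (Φ : ℝ → M → M)
    (hcont_t : ∀ x : M, ContinuousOn (fun t : ℝ => Φ t x) (Set.Ici 0))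
    (hmeas : ∀ t : ℝ, 0 ≤ t → Measurable (Φ t))
    (hid : ∀ x : M, Φ 0 x = x)
    (hsemi : ∀ t s : ℝ, 0 ≤ t → 0 ≤ s → ∀ x : M, Φ t (Φ s x) = Φ (t + s) x)
    (μ : Measure M) [IsProbabilityMeasure μ]
    (hinv : ∀ t : ℝ, 0 ≤ t → ∀ A : Set M, MeasurableSet A → μ (Φ t ⁻¹' A) = μ A) :
    μ (birkhoffCenter Φ) = 1 ∧
      {x : M | ∀ U ∈ nhds x, 0 < μ U} ⊆ birkhoffCenter Φ :=
  fullMeasure_birkhoffCenter_of_invariant_general Φ hmeas hid hsemi μ hinv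
end

section
/- For every real number κ > 1, setting γ = 9·((2√κ − 1)/(√κ − 1)² + 1), one has the inequality (x₁ + x₂ + x₃ + x₄)³ ≤ κ·x₁³ + γ·(x₂³ + x₃³ + x₄³) for all real numbers x₁, x₂, x₃, x₄ ≥ 0. -/
/-!
Write `t = √κ`, so `κ = t²` and `γ = 9 (t / (t - 1))²`. Convexity of `x ↦ x³` with weights
`1/t` and `(t - 1)/t` gives `(x₁ + s)³ ≤ t² x₁³ + (t / (t - 1))² s³` for `s = x₂ + x₃ + x₄`,
and the power-mean inequality bounds `s³` by `9 (x₂³ + x₃³ + x₄³)`.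
-/

open Finset Set

lemma add_pow_succ_le_div_add_div {a b u v : ℝ} (ha : 0 ≤ a) (hb : 0 ≤ b) (hu : 0 < u)
    (hv : 0 < v) (huv : u + v = 1) (n : ℕ) :
    (a + b) ^ (n + 1) ≤ a ^ (n + 1) / u ^ n + b ^ (n + 1) / v ^ n := by
  have h := (convexOn_pow (n + 1)).2 (mem_Ici.2 (div_nonneg ha hu.le))
    (mem_Ici.2 (div_nonneg hb hv.le)) hu.le hv.le huv
  simp only [smul_eq_mul, mul_div_cancel₀ _ hu.ne', mul_div_cancel₀ _ hv.ne'] at h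
  refine h.trans_eq ?_
  rw [div_pow, div_pow, pow_succ u, pow_succ v]
  field_simp

lemma add_cube_le_of_one_lt {a b t : ℝ} (ha : 0 ≤ a) (hb : 0 ≤ b) (ht : 1 < t) :
    (a + b) ^ 3 ≤ t ^ 2 * a ^ 3 + (t / (t - 1)) ^ 2 * b ^ 3 := by
  have h := add_pow_succ_le_div_add_div ha hb (u := 1 / t) (v := (t - 1) / t)
    (by positivity) (div_pos (by linarith) (by linarith)) (by field_simp; ring) 2
  convert h using 2 <;> field_simp

lemma add_three_cube_le (a b c : ℝ) (ha : 0 ≤ a) (hb : 0 ≤ b) (hc : 0 ≤ c) :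
    (a + b + c) ^ 3 ≤ 9 * (a ^ 3 + b ^ 3 + c ^ 3) := by
  have h := pow_sum_le_card_mul_sum_pow (s := univ) (f := ![a, b, c])
    (by simp [Fin.forall_fin_succ, ha, hb, hc]) 2
  norm_num [Fin.sum_univ_three] at h
  exact h

lemma div_sub_one_sq_eq {t : ℝ} (ht : t ≠ 1) :
    (t / (t - 1)) ^ 2 = (2 * t - 1) / (t - 1) ^ 2 + 1 := by
  have : t - 1 ≠ 0 := sub_ne_zero.2 ht
  field_simp
  ring

/-- For every `κ > 1`, with `γ = 9·((2√κ − 1)/(√κ − 1)² + 1)`, one has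
`(x₁ + x₂ + x₃ + x₄)³ ≤ κ·x₁³ + γ·(x₂³ + x₃³ + x₄³)` for all nonnegative reals. -/
theorem cube_sum_ineq (κ : ℝ) (hκ : 1 < κ) :
    ∀ x₁ x₂ x₃ x₄ : ℝ, 0 ≤ x₁ → 0 ≤ x₂ → 0 ≤ x₃ → 0 ≤ x₄ →
      (x₁ + x₂ + x₃ + x₄) ^ 3 ≤
        κ * x₁ ^ 3 +
          (9 * ((2 * Real.sqrt κ - 1) / (Real.sqrt κ - 1) ^ 2 + 1)) *
            (x₂ ^ 3 + x₃ ^ 3 + x₄ ^ 3) := by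
  intro x₁ x₂ x₃ x₄ h₁ h₂ h₃ h₄
  set t := Real.sqrt κ
  have ht : 1 < t := Real.lt_sqrt zero_le_one |>.2 (by simpa using hκ)
  have hκt : κ = t ^ 2 := (Real.sq_sqrt (by linarith)).symm
  rw [← div_sub_one_sq_eq ht.ne']
  calc (x₁ + x₂ + x₃ + x₄) ^ 3 = (x₁ + (x₂ + x₃ + x₄)) ^ 3 := by ring
    _ ≤ t ^ 2 * x₁ ^ 3 + (t / (t - 1)) ^ 2 * (x₂ + x₃ + x₄) ^ 3 :=
      add_cube_le_of_one_lt h₁ (by positivity) ht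
    _ ≤ κ * x₁ ^ 3 + (t / (t - 1)) ^ 2 * (9 * (x₂ ^ 3 + x₃ ^ 3 + x₄ ^ 3)) := by
      rw [hκt]; gcongr; exact add_three_cube_le _ _ _ h₂ h₃ h₄
    _ = _ := by ring
end

section
/- The planar vector field b : ℝ² → ℝ² of the Bernoulli-lemniscate system, given by b(x,y) = ( −f(I(x,y))·(4x(x²+y²) − 8x) − g(I(x,y))·(4y(x²+y²) + 8y), −f(I(x,y))·(4y(x²+y²) + 8y) − g(I(x,y))·(−4x(x²+y²) + 8x) ), is globally Lipschitz continuous on ℝ²: there exists a constant L ≥ 0 such that ‖b(p) − b(q)‖ ≤ L·‖p − q‖ for all p, q ∈ ℝ², where ‖·‖ is the Euclidean norm. -/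
/-!
With `∇I = (P, Q)` and its rotation `(Q, -P)`, the field is `b = -f(I) ∇I - g(I) (Q, -P)`, so each
coordinate of `b` is a combination of functions `h(I) · D` with `h ∈ {f, g}` and `D ∈ {P, Q}`.
Writing `U = (1 + I²)^(1/8)`, away from a bounded set `I` grows like `r⁴`, whence
`r² ≲ U²`, `|∇I| ≲ U³` and `|∇²I| ≲ U²`, while `|f|, |g| ≲ U⁻²` and `|f'|, |g'| ≲ U⁻⁶`.
The derivative `h'(I) (∇I · w) D + h(I) (∇D · w)` of `h(I) · D` in a direction `w` is therefore
bounded by a constant times `‖w‖`, and the mean value inequality along segments gives the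
Lipschitz bound.
-/

/-- `I(x,y) = (x²+y²)² − 4(x²−y²)`. -/
noncomputable def lemI (x y : ℝ) : ℝ := (x ^ 2 + y ^ 2) ^ 2 - 4 * (x ^ 2 - y ^ 2)

/-- `f(s) = s(s²+4)/(4(1+s²)^{7/4})`. -/
noncomputable def lemf (s : ℝ) : ℝ := s * (s ^ 2 + 4) / (4 * (1 + s ^ 2) ^ ((7 : ℝ) / 4))

/-- `g(s) = (s²+4)/(4(1+s²)^{11/8})`. -/
noncomputable def lemg (s : ℝ) : ℝ := (s ^ 2 + 4) / (4 * (1 + s ^ 2) ^ ((11 : ℝ) / 8))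

/-- First component of the Bernoulli-lemniscate vector field. -/
noncomputable def lemb₁ (x y : ℝ) : ℝ :=
  -lemf (lemI x y) * (4 * x * (x ^ 2 + y ^ 2) - 8 * x) -
    lemg (lemI x y) * (4 * y * (x ^ 2 + y ^ 2) + 8 * y)

/-- Second component of the Bernoulli-lemniscate vector field. -/
noncomputable def lemb₂ (x y : ℝ) : ℝ :=
  -lemf (lemI x y) * (4 * y * (x ^ 2 + y ^ 2) + 8 * y) -
    lemg (lemI x y) * (-4 * x * (x ^ 2 + y ^ 2) + 8 * x)

/-- The Bernoulli-lemniscate vector field `b : ℝ² → ℝ²` (with the Euclidean norm). -/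
noncomputable def lemb (p : EuclideanSpace ℝ (Fin 2)) : EuclideanSpace ℝ (Fin 2) :=
  (WithLp.equiv 2 (Fin 2 → ℝ)).symm ![lemb₁ (p 0) (p 1), lemb₂ (p 0) (p 1)]

open NNReal

local notation "ℝ²" => EuclideanSpace ℝ (Fin 2)

theorem lipschitzWith_of_hasLineDerivAt_le {E G : Type*} [NormedAddCommGroup E] [NormedSpace ℝ E]
    [NormedAddCommGroup G] [NormedSpace ℝ G] {F : E → G} {K : ℝ≥0}
    (hF : ∀ p w : E, ∃ d, HasLineDerivAt ℝ F d p w ∧ ‖d‖ ≤ K * ‖w‖) : LipschitzWith K F := by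
  refine lipschitzWith_iff_norm_sub_le.2 fun p q => ?_
  choose d hd hdK using fun t : ℝ => hF (q + t • (p - q)) (p - q)
  have hderiv (t : ℝ) : HasDerivAt (fun s : ℝ => F (q + s • (p - q))) (d t) t := by
    have h : HasDerivAt (fun s : ℝ => F (q + t • (p - q) + s • (p - q))) (d t) (t - t) := by
      rw [sub_self]; exact hd t
    convert h.comp_sub_const t t using 2 with s
    rw [add_assoc, ← add_smul, add_sub_cancel]
  simpa using norm_image_sub_le_of_norm_deriv_le_segment_01'
    (fun t _ => (hderiv t).hasDerivWithinAt) fun t _ => hdK t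

theorem EuclideanSpace.lipschitzWith_of_forall_apply {α ι : Type*} [PseudoEMetricSpace α]
    [Fintype ι] {F : α → EuclideanSpace ℝ ι} {K : ℝ≥0} (hF : ∀ i, LipschitzWith K fun x => F x i) :
    LipschitzWith (NNReal.sqrt (Fintype.card ι) * K) F := by
  have hpi : LipschitzWith K fun x => (F x).ofLp := fun x y => edist_pi_le_iff.2 fun i => hF i x y
  have := (PiLp.lipschitzWith_toLp 2 fun _ : ι => ℝ).comp hpi
  simpa [Function.comp_def, NNReal.sqrt_eq_rpow] using this

lemma EuclideanSpace.hasDerivAt_add_smul_apply {ι : Type*} (p w : EuclideanSpace ℝ ι) (i : ι)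
    (t : ℝ) : HasDerivAt (fun t : ℝ => (p + t • w) i) (w i) t := by
  simpa using ((hasDerivAt_id' t).mul_const (w i)).const_add (p i)

lemma abs_mul_add_mul_le {a b u v M N : ℝ} (ha : |a| ≤ M) (hb : |b| ≤ M) (hu : |u| ≤ N)
    (hv : |v| ≤ N) : |a * u + b * v| ≤ 2 * M * N := by
  have hM : 0 ≤ M := (abs_nonneg a).trans ha
  calc |a * u + b * v| ≤ |a| * |u| + |b| * |v| := by
        simpa only [abs_mul] using abs_add_le (a * u) (b * v)
    _ ≤ M * N + M * N := by gcongr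
    _ = 2 * M * N := by ring

noncomputable def lemU (s : ℝ) : ℝ := (1 + s ^ 2) ^ ((1 : ℝ) / 8)

lemma lemU_pos (s : ℝ) : 0 < lemU s := Real.rpow_pos_of_pos (by positivity) _

lemma one_le_lemU (s : ℝ) : 1 ≤ lemU s :=
  Real.one_le_rpow (by nlinarith [sq_nonneg s]) (by norm_num)

lemma lemU_pow (s : ℝ) (n : ℕ) : lemU s ^ n = (1 + s ^ 2) ^ ((n : ℝ) / 8) := by
  rw [lemU, ← Real.rpow_natCast, ← Real.rpow_mul (by positivity)]
  ring_nf

lemma lemU_pow_eight (s : ℝ) : lemU s ^ 8 = 1 + s ^ 2 := by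
  rw [lemU_pow]; norm_num

lemma abs_le_lemU_pow_four (s : ℝ) : |s| ≤ lemU s ^ 4 := by
  have h : (lemU s ^ 4) ^ 2 = 1 + s ^ 2 := by rw [← lemU_pow_eight]; ring
  exact abs_le_of_sq_le_sq (by nlinarith) (by positivity)

/-- With `U = lemU ∘ I`, these decay rates exactly compensate `|∇I| ≲ U³` and `|∇²I| ≲ U²`. -/
structure IsLemProfile (h h' : ℝ → ℝ) (C : ℝ≥0) : Prop where
  hasDerivAt : ∀ s, HasDerivAt h (h' s) s
  abs_mul_le : ∀ s, |h s| * lemU s ^ 2 ≤ C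
  abs_deriv_mul_le : ∀ s, |h' s| * lemU s ^ 6 ≤ C

/- `lemU s ^ 22 = (1 + s²)^(11/4)` and `lemU s ^ 19 = (1 + s²)^(19/8)`. -/
noncomputable def lemf' (s : ℝ) : ℝ :=
  ((3 * s ^ 2 + 4) * (1 + s ^ 2) - 7 / 2 * s ^ 2 * (s ^ 2 + 4)) / (4 * lemU s ^ 22)

noncomputable def lemg' (s : ℝ) : ℝ :=
  (2 * s * (1 + s ^ 2) - 11 / 4 * s * (s ^ 2 + 4)) / (4 * lemU s ^ 19)

lemma hasDerivAt_lemf (s : ℝ) : HasDerivAt lemf (lemf' s) s := by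
  have hpos : (0 : ℝ) < 1 + s ^ 2 := by positivity
  have hnum : HasDerivAt (fun t : ℝ => t * (t ^ 2 + 4)) (1 * (s ^ 2 + 4) + s * (2 * s)) s := by
    simpa using (hasDerivAt_id' s).fun_mul ((hasDerivAt_pow 2 s).add_const 4)
  have hden : HasDerivAt (fun t : ℝ => 4 * (1 + t ^ 2) ^ ((7 : ℝ) / 4))
      (4 * (2 * s * (7 / 4) * (1 + s ^ 2) ^ ((7 : ℝ) / 4 - 1))) s := by
    have := ((hasDerivAt_pow 2 s).const_add 1).rpow_const (p := 7 / 4) (Or.inl hpos.ne')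
    simpa [mul_comm, mul_assoc, mul_left_comm] using this.const_mul 4
  refine (hnum.fun_div hden (by positivity)).congr_deriv ?_
  have e14 : (1 + s ^ 2) ^ ((7 : ℝ) / 4) = lemU s ^ 14 := by rw [lemU_pow]; norm_num
  have e6 : (1 + s ^ 2) ^ ((7 : ℝ) / 4 - 1) = lemU s ^ 6 := by rw [lemU_pow]; norm_num
  have := lemU_pos s
  rw [lemf', e14, e6]
  field_simp
  linear_combination (24 * s ^ 2 + 32) * lemU_pow_eight s

lemma hasDerivAt_lemg (s : ℝ) : HasDerivAt lemg (lemg' s) s := by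
  have hpos : (0 : ℝ) < 1 + s ^ 2 := by positivity
  have hnum : HasDerivAt (fun t : ℝ => t ^ 2 + 4) (2 * s) s := by
    simpa using (hasDerivAt_pow 2 s).add_const 4
  have hden : HasDerivAt (fun t : ℝ => 4 * (1 + t ^ 2) ^ ((11 : ℝ) / 8))
      (4 * (2 * s * (11 / 8) * (1 + s ^ 2) ^ ((11 : ℝ) / 8 - 1))) s := by
    have := ((hasDerivAt_pow 2 s).const_add 1).rpow_const (p := 11 / 8) (Or.inl hpos.ne')
    simpa [mul_comm, mul_assoc, mul_left_comm] using this.const_mul 4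
  refine (hnum.fun_div hden (by positivity)).congr_deriv ?_
  have e11 : (1 + s ^ 2) ^ ((11 : ℝ) / 8) = lemU s ^ 11 := by rw [lemU_pow]; norm_num
  have e3 : (1 + s ^ 2) ^ ((11 : ℝ) / 8 - 1) = lemU s ^ 3 := by rw [lemU_pow]; norm_num
  have := lemU_pos s
  rw [lemg', e11, e3]
  field_simp
  linear_combination 64 * s * lemU_pow_eight s

lemma abs_lemf_mul_le (s : ℝ) : |lemf s| * lemU s ^ 2 ≤ 3 := by
  have hU := lemU_pos s
  have h14 : lemU s ^ 6 ≤ lemU s ^ 14 := pow_le_pow_right₀ (one_le_lemU s) (by norm_num)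
  have e14 : (1 + s ^ 2) ^ ((7 : ℝ) / 4) = lemU s ^ 14 := by rw [lemU_pow]; norm_num
  rw [lemf, e14, abs_div, abs_mul, abs_of_pos (by positivity : (0 : ℝ) < s ^ 2 + 4),
    abs_of_pos (by positivity : (0 : ℝ) < 4 * lemU s ^ 14), div_mul_eq_mul_div,
    div_le_iff₀ (by positivity)]
  nlinarith [mul_le_mul_of_nonneg_right (abs_le_lemU_pow_four s)
    (by positivity : (0 : ℝ) ≤ (s ^ 2 + 4) * lemU s ^ 2), lemU_pow_eight s, pow_pos hU 2]

lemma abs_lemg_mul_le (s : ℝ) : |lemg s| * lemU s ^ 2 ≤ 3 := by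
  have hU := lemU_pos s
  have h11 : lemU s ^ 10 ≤ lemU s ^ 11 := pow_le_pow_right₀ (one_le_lemU s) (by norm_num)
  have e11 : (1 + s ^ 2) ^ ((11 : ℝ) / 8) = lemU s ^ 11 := by rw [lemU_pow]; norm_num
  rw [lemg, e11, abs_div, abs_of_pos (by positivity : (0 : ℝ) < s ^ 2 + 4),
    abs_of_pos (by positivity : (0 : ℝ) < 4 * lemU s ^ 11), div_mul_eq_mul_div,
    div_le_iff₀ (by positivity)]
  nlinarith [lemU_pow_eight s, one_le_pow₀ (n := 8) (one_le_lemU s), pow_pos hU 2]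

lemma abs_lemf'_mul_le (s : ℝ) : |lemf' s| * lemU s ^ 6 ≤ 3 := by
  have hU := lemU_pos s
  have h8 := lemU_pow_eight s
  have h16 : lemU s ^ 8 ≤ lemU s ^ 16 := pow_le_pow_right₀ (one_le_lemU s) (by norm_num)
  have hs4 : s ^ 4 ≤ lemU s ^ 16 := by nlinarith [pow_nonneg hU.le 8]
  have hN : |(3 * s ^ 2 + 4) * (1 + s ^ 2) - 7 / 2 * s ^ 2 * (s ^ 2 + 4)| ≤ 12 * lemU s ^ 16 := by
    rw [abs_le]; constructor <;> nlinarith [one_le_pow₀ (n := 8) (one_le_lemU s)]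
  rw [lemf', abs_div, abs_of_pos (by positivity : (0 : ℝ) < 4 * lemU s ^ 22),
    div_mul_eq_mul_div, div_le_iff₀ (by positivity)]
  nlinarith [mul_le_mul_of_nonneg_right hN (by positivity : (0 : ℝ) ≤ lemU s ^ 6), pow_pos hU 22]

lemma abs_lemg'_mul_le (s : ℝ) : |lemg' s| * lemU s ^ 6 ≤ 3 := by
  have hU := lemU_pos s
  have h1 := one_le_lemU s
  have hs : |s| ≤ lemU s ^ 12 :=
    (abs_le_lemU_pow_four s).trans (pow_le_pow_right₀ h1 (by norm_num))
  have hs3 : |s| ^ 3 ≤ lemU s ^ 12 :=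
    (pow_le_pow_left₀ (abs_nonneg s) (abs_le_lemU_pow_four s) 3).trans_eq (by ring)
  have hN : |2 * s * (1 + s ^ 2) - 11 / 4 * s * (s ^ 2 + 4)| ≤ 10 * lemU s ^ 12 :=
    calc |2 * s * (1 + s ^ 2) - 11 / 4 * s * (s ^ 2 + 4)| = |9 * s + 3 / 4 * s ^ 3| := by
          rw [← abs_neg]; ring_nf
      _ ≤ 9 * |s| + 3 / 4 * |s| ^ 3 := by
          refine (abs_add_le _ _).trans_eq ?_
          rw [abs_mul, abs_mul, abs_pow]; norm_num
      _ ≤ 10 * lemU s ^ 12 := by linarith [pow_pos hU 12]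
  have h19 : lemU s ^ 18 ≤ lemU s ^ 19 := pow_le_pow_right₀ h1 (by norm_num)
  rw [lemg', abs_div, abs_of_pos (by positivity : (0 : ℝ) < 4 * lemU s ^ 19),
    div_mul_eq_mul_div, div_le_iff₀ (by positivity)]
  nlinarith [mul_le_mul_of_nonneg_right hN (by positivity : (0 : ℝ) ≤ lemU s ^ 6), pow_pos hU 19]

lemma isLemProfile_lemf : IsLemProfile lemf lemf' 3 :=
  ⟨hasDerivAt_lemf, by exact_mod_cast abs_lemf_mul_le, by exact_mod_cast abs_lemf'_mul_le⟩

lemma isLemProfile_lemg : IsLemProfile lemg lemg' 3 :=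
  ⟨hasDerivAt_lemg, by exact_mod_cast abs_lemg_mul_le, by exact_mod_cast abs_lemg'_mul_le⟩

noncomputable def lemP (x y : ℝ) : ℝ := 4 * x * (x ^ 2 + y ^ 2) - 8 * x

noncomputable def lemQ (x y : ℝ) : ℝ := 4 * y * (x ^ 2 + y ^ 2) + 8 * y

/-- Differentiability of `D` with partial derivatives `Dx`, `Dy`, in the form of the chain rule
along differentiable curves. -/
def HasPartialDerivs (D Dx Dy : ℝ → ℝ → ℝ) : Prop :=
  ∀ ⦃x y : ℝ → ℝ⦄ ⦃u v t : ℝ⦄, HasDerivAt x u t → HasDerivAt y v t →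
    HasDerivAt (fun t => D (x t) (y t)) (Dx (x t) (y t) * u + Dy (x t) (y t) * v) t

lemma hasPartialDerivs_lemI : HasPartialDerivs lemI lemP lemQ := fun x y u v t hx hy => by
  refine ((((hx.pow 2).add (hy.pow 2)).pow 2).sub (((hx.pow 2).sub (hy.pow 2)).const_mul 4))
    |>.congr_deriv ?_
  simp only [lemP, lemQ, Pi.add_apply, Pi.pow_apply]; push_cast; ring

lemma hasPartialDerivs_lemP :
    HasPartialDerivs lemP (fun x y => 12 * x ^ 2 + 4 * y ^ 2 - 8) (fun x y => 8 * x * y) :=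
  fun x y u v t hx hy => by
    refine ((hx.const_mul 4).mul ((hx.pow 2).add (hy.pow 2)) |>.sub (hx.const_mul 8))
      |>.congr_deriv ?_
    simp only [Pi.add_apply, Pi.pow_apply]; push_cast; ring

lemma hasPartialDerivs_lemQ :
    HasPartialDerivs lemQ (fun x y => 8 * x * y) (fun x y => 4 * x ^ 2 + 12 * y ^ 2 + 8) :=
  fun x y u v t hx hy => by
    refine ((hy.const_mul 4).mul ((hx.pow 2).add (hy.pow 2)) |>.add (hy.const_mul 8))
      |>.congr_deriv ?_
    simp only [Pi.add_apply, Pi.pow_apply]; push_cast; ring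

/-- For `x² + y² ≥ 8` we have `(x² + y²)² ≤ 2 I`, because `|x² - y²| ≤ x² + y²`. -/
lemma sq_add_sq_le_lemU_lemI (x y : ℝ) : x ^ 2 + y ^ 2 ≤ 8 * lemU (lemI x y) ^ 2 := by
  set s := lemI x y with hs
  have h8 := lemU_pow_eight s
  have h18 : 1 ≤ lemU s ^ 8 := one_le_pow₀ (one_le_lemU s)
  have h4 : (x ^ 2 + y ^ 2) ^ 4 ≤ 4096 * lemU s ^ 8 := by
    rcases le_or_gt (x ^ 2 + y ^ 2) 8 with h | h
    · calc (x ^ 2 + y ^ 2) ^ 4 ≤ 8 ^ 4 := pow_le_pow_left₀ (by positivity) h 4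
        _ ≤ 4096 * lemU s ^ 8 := by linarith
    · have hIge : (x ^ 2 + y ^ 2) ^ 2 ≤ 2 * s := by
        rw [hs, lemI]; nlinarith [sq_nonneg y, sq_nonneg x]
      nlinarith [sq_nonneg (x ^ 2 + y ^ 2), sq_nonneg s]
  refine le_of_pow_le_pow_left₀ (n := 4) (by norm_num) (by positivity) ?_
  linarith [show (8 * lemU s ^ 2) ^ 4 = 4096 * lemU s ^ 8 by ring]

lemma abs_lemP_le_and_abs_lemQ_le (x y : ℝ) :
    |lemP x y| ≤ 26 * lemU (lemI x y) ^ 3 ∧ |lemQ x y| ≤ 26 * lemU (lemI x y) ^ 3 := by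
  set s := lemI x y with hs
  have hU := lemU_pos s
  have hr := sq_add_sq_le_lemU_lemI x y
  have hid : lemP x y ^ 2 + lemQ x y ^ 2 = 16 * (x ^ 2 + y ^ 2) * (s + 4) := by
    rw [lemP, lemQ, hs, lemI]; ring
  have hs4 : s + 4 ≤ 5 * lemU s ^ 4 := by
    have := one_le_pow₀ (n := 4) (one_le_lemU s)
    linarith [le_abs_self s, abs_le_lemU_pow_four s]
  have hsum : lemP x y ^ 2 + lemQ x y ^ 2 ≤ (26 * lemU s ^ 3) ^ 2 := by
    rw [hid]
    calc 16 * (x ^ 2 + y ^ 2) * (s + 4) ≤ 16 * (8 * lemU s ^ 2) * (5 * lemU s ^ 4) := by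
          gcongr
          · rw [hs, lemI]; nlinarith [sq_nonneg (x ^ 2 - 2), sq_nonneg (x * y), sq_nonneg y]
      _ ≤ (26 * lemU s ^ 3) ^ 2 := by nlinarith [pow_pos hU 6]
  exact ⟨abs_le_of_sq_le_sq (by nlinarith [sq_nonneg (lemQ x y)]) (by positivity),
    abs_le_of_sq_le_sq (by nlinarith [sq_nonneg (lemP x y)]) (by positivity)⟩

lemma abs_second_partials_lemI_le (x y : ℝ) :
    |12 * x ^ 2 + 4 * y ^ 2 - 8| ≤ 104 * lemU (lemI x y) ^ 2 ∧
    |8 * x * y| ≤ 104 * lemU (lemI x y) ^ 2 ∧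
    |4 * x ^ 2 + 12 * y ^ 2 + 8| ≤ 104 * lemU (lemI x y) ^ 2 := by
  have hr := sq_add_sq_le_lemU_lemI x y
  have h1 : 1 ≤ lemU (lemI x y) ^ 2 := one_le_pow₀ (one_le_lemU _)
  refine ⟨abs_le.2 ⟨?_, ?_⟩, abs_le.2 ⟨?_, ?_⟩, abs_le.2 ⟨?_, ?_⟩⟩ <;>
    nlinarith [sq_nonneg x, sq_nonneg y, sq_nonneg (x - y), sq_nonneg (x + y)]

section Profile

variable {h h' : ℝ → ℝ} {C : ℝ≥0}

lemma IsLemProfile.abs_chain_le (hh : IsLemProfile h h' C)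
    {s a b c A B D : ℝ} (ha : |a| ≤ A * lemU s ^ 3) (hb : |b| ≤ B * lemU s ^ 3)
    (hc : |c| ≤ D * lemU s ^ 2) :
    |h' s * a * b + h s * c| ≤ C * (A * B + D) := by
  have hU := lemU_pos s
  have hA : 0 ≤ A := nonneg_of_mul_nonneg_left ((abs_nonneg a).trans ha) (by positivity)
  have hB : 0 ≤ B := nonneg_of_mul_nonneg_left ((abs_nonneg b).trans hb) (by positivity)
  have hD : 0 ≤ D := nonneg_of_mul_nonneg_left ((abs_nonneg c).trans hc) (by positivity)
  calc |h' s * a * b + h s * c| ≤ |h' s| * |a| * |b| + |h s| * |c| := by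
        simpa only [abs_mul] using abs_add_le (h' s * a * b) (h s * c)
    _ ≤ |h' s| * (A * lemU s ^ 3) * (B * lemU s ^ 3) + |h s| * (D * lemU s ^ 2) := by gcongr
    _ = |h' s| * lemU s ^ 6 * (A * B) + |h s| * lemU s ^ 2 * D := by ring
    _ ≤ C * (A * B) + C * D := by
        gcongr
        exacts [hh.abs_deriv_mul_le s, hh.abs_mul_le s]
    _ = C * (A * B + D) := by ring

lemma IsLemProfile.lipschitzWith_mul (hh : IsLemProfile h h' C)
    {D Dx Dy : ℝ → ℝ → ℝ} (hD : HasPartialDerivs D Dx Dy)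
    (hD_le : ∀ x y, |D x y| ≤ 26 * lemU (lemI x y) ^ 3)
    (hDx_le : ∀ x y, |Dx x y| ≤ 104 * lemU (lemI x y) ^ 2)
    (hDy_le : ∀ x y, |Dy x y| ≤ 104 * lemU (lemI x y) ^ 2) :
    LipschitzWith (C * 1560) fun p : ℝ² => h (lemI (p 0) (p 1)) * D (p 0) (p 1) := by
  refine lipschitzWith_of_hasLineDerivAt_le fun p w => ?_
  have hx := EuclideanSpace.hasDerivAt_add_smul_apply p w 0 0
  have hy := EuclideanSpace.hasDerivAt_add_smul_apply p w 1 0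
  refine ⟨_, ((hh.hasDerivAt _).comp 0 (hasPartialDerivs_lemI hx hy)).mul (hD hx hy), ?_⟩
  have hw0 : |w 0| ≤ ‖w‖ := by simpa using PiLp.norm_apply_le w 0
  have hw1 : |w 1| ≤ ‖w‖ := by simpa using PiLp.norm_apply_le w 1
  obtain ⟨hP, hQ⟩ := abs_lemP_le_and_abs_lemQ_le (p 0) (p 1)
  simp only [Function.comp_apply, zero_smul, add_zero, Real.norm_eq_abs, NNReal.coe_mul,
    NNReal.coe_ofNat]
  calc _ ≤ C * (52 * ‖w‖ * 26 + 208 * ‖w‖) := hh.abs_chain_le ?_ (hD_le _ _) ?_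
    _ = C * 1560 * ‖w‖ := by ring
  · exact (abs_mul_add_mul_le hP hQ hw0 hw1).trans_eq (by ring)
  · exact (abs_mul_add_mul_le (hDx_le _ _) (hDy_le _ _) hw0 hw1).trans_eq (by ring)

lemma IsLemProfile.lipschitzWith_mul_lemP (hh : IsLemProfile h h' C) :
    LipschitzWith (C * 1560) fun p : ℝ² => h (lemI (p 0) (p 1)) * lemP (p 0) (p 1) :=
  hh.lipschitzWith_mul hasPartialDerivs_lemP (fun x y => (abs_lemP_le_and_abs_lemQ_le x y).1)
    (fun x y => (abs_second_partials_lemI_le x y).1)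
    (fun x y => (abs_second_partials_lemI_le x y).2.1)

lemma IsLemProfile.lipschitzWith_mul_lemQ (hh : IsLemProfile h h' C) :
    LipschitzWith (C * 1560) fun p : ℝ² => h (lemI (p 0) (p 1)) * lemQ (p 0) (p 1) :=
  hh.lipschitzWith_mul hasPartialDerivs_lemQ (fun x y => (abs_lemP_le_and_abs_lemQ_le x y).2)
    (fun x y => (abs_second_partials_lemI_le x y).2.1)
    (fun x y => (abs_second_partials_lemI_le x y).2.2)

end Profile

lemma lemb_apply_zero (p : ℝ²) : lemb p 0 =
    -(lemf (lemI (p 0) (p 1)) * lemP (p 0) (p 1)) - lemg (lemI (p 0) (p 1)) * lemQ (p 0) (p 1) := by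
  change lemb₁ _ _ = _
  rw [lemb₁, lemP, lemQ]; ring

lemma lemb_apply_one (p : ℝ²) : lemb p 1 =
    -(lemf (lemI (p 0) (p 1)) * lemQ (p 0) (p 1)) + lemg (lemI (p 0) (p 1)) * lemP (p 0) (p 1) := by
  change lemb₂ _ _ = _
  rw [lemb₂, lemP, lemQ]; ring

lemma lipschitzWith_lemb : LipschitzWith (NNReal.sqrt 2 * (3 * 1560 + 3 * 1560)) lemb := by
  have hb := EuclideanSpace.lipschitzWith_of_forall_apply (F := lemb) (K := 3 * 1560 + 3 * 1560)
  simp only [Fintype.card_fin, Nat.cast_ofNat] at hb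
  refine hb (Fin.forall_fin_two.2 ⟨?_, ?_⟩)
  · simp only [lemb_apply_zero]
    exact isLemProfile_lemf.lipschitzWith_mul_lemP.neg.sub isLemProfile_lemg.lipschitzWith_mul_lemQ
  · simp only [lemb_apply_one]
    exact isLemProfile_lemf.lipschitzWith_mul_lemQ.neg.add isLemProfile_lemg.lipschitzWith_mul_lemP

/-- The Bernoulli-lemniscate vector field is globally Lipschitz on `ℝ²`
with respect to the Euclidean norm. -/
theorem lemniscate_vectorField_globally_lipschitz :
    ∃ L : ℝ, 0 ≤ L ∧ ∀ p q : EuclideanSpace ℝ (Fin 2), ‖lemb p - lemb q‖ ≤ L * ‖p - q‖ :=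
  ⟨_, NNReal.coe_nonneg _, lipschitzWith_lemb.norm_sub_le⟩
end

section
/- The planar vector field b : ℝ² → ℝ² of the Bernoulli-lemniscate system has exactly three equilibria: b(x,y) = (0,0) if and only if (x,y) ∈ {(0,0), (√2, 0), (−√2, 0)}. -/
/-!
Writing `(u, v) = ∇I`, the field is `b = -f(I) ∇I - g(I) J ∇I` with `J` the rotation by `-π/2`;
in complex notation `b₁ + i b₂ = (-f(I) + i g(I)) (u + i v)`. Since `g > 0` the first factor never
vanishes, so the equilibria of `b` are exactly the critical points of `I`, and
`∇I = (4x(x² + y² - 2), 4y(x² + y² + 2))` vanishes only at `(0, 0)` and `(±√2, 0)`.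
-/

lemma neg_mul_sub_mul_eq_zero_and_iff {f g u v : ℝ} (hfg : f ^ 2 + g ^ 2 ≠ 0) :
    (-f * u - g * v = 0 ∧ -f * v + g * u = 0) ↔ (u = 0 ∧ v = 0) := by
  constructor
  · rintro ⟨h₁, h₂⟩
    have hu : (f ^ 2 + g ^ 2) * u = 0 := by linear_combination (-f) * h₁ + g * h₂
    have hv : (f ^ 2 + g ^ 2) * v = 0 := by linear_combination (-g) * h₁ - f * h₂
    exact ⟨(mul_eq_zero.mp hu).resolve_left hfg, (mul_eq_zero.mp hv).resolve_left hfg⟩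
  · rintro ⟨rfl, rfl⟩
    constructor <;> ring

lemma lemg_pos (s : ℝ) : 0 < lemg s := by
  unfold lemg
  positivity

lemma lemb₂_eq (x y : ℝ) :
    lemb₂ x y = -lemf (lemI x y) * (4 * y * (x ^ 2 + y ^ 2) + 8 * y) +
      lemg (lemI x y) * (4 * x * (x ^ 2 + y ^ 2) - 8 * x) := by
  rw [lemb₂]
  ring

lemma lemI_critical_iff (x y : ℝ) :
    (4 * x * (x ^ 2 + y ^ 2) - 8 * x = 0 ∧ 4 * y * (x ^ 2 + y ^ 2) + 8 * y = 0) ↔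
      ((x, y) = ((0 : ℝ), (0 : ℝ)) ∨ (x, y) = (√2, 0) ∨ (x, y) = (-√2, 0)) := by
  have hy : 4 * y * (x ^ 2 + y ^ 2) + 8 * y = 0 ↔ y = 0 := by
    have hpos : 0 < 4 * (x ^ 2 + y ^ 2 + 2) := by positivity
    rw [show 4 * y * (x ^ 2 + y ^ 2) + 8 * y = y * (4 * (x ^ 2 + y ^ 2 + 2)) by ring,
      mul_eq_zero, or_iff_left hpos.ne']
  have hx : 4 * x * x ^ 2 - 8 * x = 0 ↔ x = 0 ∨ x = √2 ∨ x = -√2 := by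
    rw [show 4 * x * x ^ 2 - 8 * x = 4 * x * (x ^ 2 - √2 ^ 2) by
        rw [Real.sq_sqrt zero_le_two]; ring,
      mul_eq_zero, sub_eq_zero, sq_eq_sq_iff_eq_or_eq_neg]
    simp
  simp only [Prod.mk.injEq, hy]
  constructor
  · rintro ⟨hu, rfl⟩
    have := hx.mp (by simpa using hu)
    tauto
  · rintro (⟨hx₀, rfl⟩ | ⟨hx₀, rfl⟩ | ⟨hx₀, rfl⟩) <;> refine ⟨?_, rfl⟩ <;>
      simpa using hx.mpr (by tauto)

/-- The Bernoulli-lemniscate vector field has exactly three equilibria: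
`(0,0)`, `(√2, 0)` and `(−√2, 0)`. -/
theorem lemniscate_equilibria (x y : ℝ) :
    (lemb₁ x y = 0 ∧ lemb₂ x y = 0) ↔
      ((x, y) = ((0 : ℝ), (0 : ℝ)) ∨ (x, y) = (Real.sqrt 2, 0) ∨
        (x, y) = (-Real.sqrt 2, 0)) := by
  have hfg : lemf (lemI x y) ^ 2 + lemg (lemI x y) ^ 2 ≠ 0 := by
    have := lemg_pos (lemI x y)
    positivity
  rw [lemb₁, lemb₂_eq, neg_mul_sub_mul_eq_zero_and_iff hfg, lemI_critical_iff]
end
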